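/- Let p_u and p_v be probability distributions on [n] and let P* be a local minimizer of the Shannon entropy H(P) = −∑_{i,j} P(i,j) log₂ P(i,j) over the polytope of n×n couplings P of p_u and p_v (i.e., P(i,j) ≥ 0, ∑_j P(i,j) = p_u(i) for all i, ∑_i P(i,j) = p_v(j) for all j). Then P* is quasi-orthogonal: there exist vectors u, v ∈ ℝⁿ such that P*(i,j) = uᵢ vⱼ for every pair (i,j) with P*(i,j) > 0. Equivalently, every local optimum is a masked submatrix of a rank-1 matrix. -/

import Mathlib

/-- `P` is a coupling of the distributions `pu` and `pv` on `[n]`: an `n × n` matrix with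
nonnegative entries, row sums `pu` and column sums `pv`. -/
def IsCoupling {n : ℕ} (pu pv : Fin n → ℝ) (P : Fin n → Fin n → ℝ) : Prop :=
  (∀ i j, 0 ≤ P i j) ∧ (∀ i, ∑ j, P i j = pu i) ∧ (∀ j, ∑ i, P i j = pv j)

/-- Shannon entropy (base 2) of an `n × n` joint distribution matrix. -/
noncomputable def matrixEntropy {n : ℕ} (P : Fin n → Fin n → ℝ) : ℝ :=
  -∑ i, ∑ j, P i j * Real.logb 2 (P i j)

/-!
If a nonzero matrix `d` with zero row and column sums is supported on the support of `P`, then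
`P + t • d` is a coupling for all small `|t|`, and the entropy, being strictly concave, has no
local minimum at `t = 0` along this line. Hence the marginal map is injective on matrices
supported on `supp P`; dually, `(a, b) ↦ (a i + b j)` restricted to `supp P` is surjective.
Applying this to `log P` and exponentiating gives `P i j = exp (a i) * exp (b j)` on the support.
-/

open Real Filter Finset Topology

theorem StrictConcaveOn.div_const {E : Type*} [AddCommMonoid E] [Module ℝ E] {s : Set E}
    {f : E → ℝ} (hf : StrictConcaveOn ℝ s f) {c : ℝ} (hc : 0 < c) :
    StrictConcaveOn ℝ s (fun x => f x / c) := by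
  refine ⟨hf.1, fun x hx y hy hxy a b ha hb hab => ?_⟩
  have := div_lt_div_of_pos_right (hf.2 hx hy hxy ha hb hab) hc
  simp only [smul_eq_mul] at this ⊢
  linarith [show (a * f x + b * f y) / c = a * (f x / c) + b * (f y / c) by ring]

theorem StrictConcaveOn.sum_pi {ι E : Type*} [Fintype ι] [AddCommMonoid E] [Module ℝ E]
    {s : Set E} {g : E → ℝ} (hg : StrictConcaveOn ℝ s g) :
    StrictConcaveOn ℝ (Set.univ.pi fun _ : ι => s) (fun x => ∑ i, g (x i)) := by
  refine ⟨convex_pi fun _ _ => hg.1, fun x hx y hy hxy a b ha hb hab => ?_⟩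
  obtain ⟨i₀, hi₀⟩ := Function.ne_iff.1 hxy
  simp only [Set.mem_univ_pi] at hx hy
  simp only [smul_eq_mul, mul_sum, ← sum_add_distrib, Pi.add_apply, Pi.smul_apply]
  refine sum_lt_sum (fun i _ => ?_) ⟨i₀, mem_univ _, hg.2 (hx i₀) (hy i₀) hi₀ ha hb hab⟩
  exact hg.concaveOn.2 (hx i) (hy i) ha.le hb.le hab

theorem matrixEntropy_eq_sum_negMulLog {n : ℕ} (Q : Fin n → Fin n → ℝ) :
    matrixEntropy Q = ∑ i, ∑ j, negMulLog (Q i j) / log 2 := by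
  simp only [matrixEntropy, negMulLog, logb, ← sum_neg_distrib]
  congr! 2 with i _ j _
  ring

theorem strictConcaveOn_matrixEntropy {n : ℕ} :
    StrictConcaveOn ℝ (Set.univ.pi fun _ => Set.univ.pi fun _ => Set.Ici 0)
      (matrixEntropy (n := n)) := by
  rw [funext matrixEntropy_eq_sum_negMulLog]
  exact ((strictConcaveOn_negMulLog.div_const (log_pos one_lt_two)).sum_pi).sum_pi

theorem StrictConcaveOn.eq_zero_of_isLocalMinOn {E : Type*} [AddCommGroup E] [Module ℝ E]
    [TopologicalSpace E] [ContinuousAdd E] [ContinuousSMul ℝ E] {f : E → ℝ} {s K : Set E}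
    {x d : E} (hf : StrictConcaveOn ℝ s f) (hmin : IsLocalMinOn f K x)
    (hline : ∀ᶠ t in 𝓝 (0 : ℝ), x + t • d ∈ K ∩ s) : d = 0 := by
  by_contra hd
  have hcurve : Tendsto (fun t : ℝ => x + t • d) (𝓝 0) (𝓝[K] x) := by
    refine tendsto_nhdsWithin_iff.2 ⟨?_, hline.mono fun _ ht => ht.1⟩
    have : Continuous fun t : ℝ => x + t • d := by fun_prop
    simpa using this.tendsto 0
  have hle : ∀ᶠ t in 𝓝 (0 : ℝ), f x ≤ f (x + t • d) ∧ x + t • d ∈ s :=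
    (hcurve.eventually hmin).and (hline.mono fun _ ht => ht.2)
  have hneg : ∀ᶠ t in 𝓝 (0 : ℝ), f x ≤ f (x + (-t) • d) ∧ x + (-t) • d ∈ s :=
    ((continuous_neg (G := ℝ)).tendsto' 0 0 neg_zero).eventually hle
  obtain ⟨t, ⟨⟨hleP, hsP⟩, hleN, hsN⟩, ht⟩ :=
    ((hle.and hneg).filter_mono nhdsWithin_le_nhds |>.and self_mem_nhdsWithin).exists
      (f := 𝓝[≠] (0 : ℝ))
  have hne : x + t • d ≠ x + (-t) • d := by
    intro h
    have : (2 * t) • d = 0 := by rw [mul_smul, two_smul]; simpa [neg_smul, ← sub_eq_zero] using h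
    exact (smul_ne_zero (mul_ne_zero two_ne_zero ht) hd) this
  have hmid := hf.2 hsP hsN hne one_half_pos one_half_pos (add_halves 1)
  rw [show (1 / 2 : ℝ) • (x + t • d) + (1 / 2 : ℝ) • (x + (-t) • d) = x by module] at hmid
  simp only [smul_eq_mul] at hmid
  linarith

section Coupling

variable {n : ℕ} {pu pv : Fin n → ℝ} {P d : Fin n → Fin n → ℝ}

theorem IsCoupling.eventually_add_smul (hP : IsCoupling pu pv P)
    (hrow : ∀ i, ∑ j, d i j = 0) (hcol : ∀ j, ∑ i, d i j = 0)
    (hsupp : ∀ i j, P i j = 0 → d i j = 0) :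
    ∀ᶠ t in 𝓝 (0 : ℝ), IsCoupling pu pv (P + t • d) := by
  have hnonneg : ∀ i j, ∀ᶠ t in 𝓝 (0 : ℝ), 0 ≤ P i j + t * d i j := by
    intro i j
    rcases (hP.1 i j).eq_or_lt with h0 | hpos
    · simp [hsupp i j h0.symm, ← h0]
    · have : Continuous fun t : ℝ => P i j + t * d i j := by fun_prop
      exact (continuousAt_const.eventually_lt this.continuousAt (by simpa using hpos)).mono
        fun _ ht => ht.le
  filter_upwards [eventually_all.2 fun i => eventually_all.2 (hnonneg i)] with t ht
  refine ⟨ht, fun i => ?_, fun j => ?_⟩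
  · simp [sum_add_distrib, ← mul_sum, hrow, hP.2.1]
  · simp [sum_add_distrib, ← mul_sum, hcol, hP.2.2]

theorem IsLocalMinOn.eq_zero_of_marginals_eq_zero
    (hloc : IsLocalMinOn matrixEntropy {Q | IsCoupling pu pv Q} P) (hP : IsCoupling pu pv P)
    (hrow : ∀ i, ∑ j, d i j = 0) (hcol : ∀ j, ∑ i, d i j = 0)
    (hsupp : ∀ i j, P i j = 0 → d i j = 0) : d = 0 :=
  strictConcaveOn_matrixEntropy.eq_zero_of_isLocalMinOn hloc <|
    (hP.eventually_add_smul hrow hcol hsupp).mono fun _ ht => ⟨ht, fun i _ j _ => ht.1 i j⟩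

end Coupling

section Potentials

variable {ι κ : Type*} [Fintype ι] [Fintype κ]

def maskedSum (S : ι → κ → Prop) [∀ i j, Decidable (S i j)] :
    (ι → ℝ) × (κ → ℝ) →ₗ[ℝ] ι × κ → ℝ where
  toFun ab p := if S p.1 p.2 then ab.1 p.1 + ab.2 p.2 else 0
  map_add' _ _ := by ext p; by_cases h : S p.1 p.2 <;> simp [h]; ring
  map_smul' _ _ := by ext p; by_cases h : S p.1 p.2 <;> simp [h]; ring

theorem exists_eq_add_on_of_forall_marginals_eq_zero (S : ι → κ → Prop)
    (h : ∀ d : ι → κ → ℝ, (∀ i j, ¬ S i j → d i j = 0) →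
      (∀ i, ∑ j, d i j = 0) → (∀ j, ∑ i, d i j = 0) → d = 0)
    (y : ι → κ → ℝ) : ∃ (a : ι → ℝ) (b : κ → ℝ), ∀ i j, S i j → y i j = a i + b j := by
  classical
  suffices hy : (fun p : ι × κ => if S p.1 p.2 then y p.1 p.2 else 0) ∈
      LinearMap.range (maskedSum S) by
    obtain ⟨⟨a, b⟩, hab⟩ := hy
    exact ⟨a, b, fun i j hij => by simpa [maskedSum, hij] using (congrFun hab (i, j)).symm⟩
  by_contra hy
  obtain ⟨f, hfy, hrange⟩ := Submodule.exists_le_ker_of_notMem hy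
  obtain ⟨x, rfl⟩ := (dotProductEquiv ℝ (ι × κ)).surjective f
  have hf : ∀ z, dotProductEquiv ℝ (ι × κ) x z = z ⬝ᵥ x := fun z => by
    simp [dotProduct_comm]
  set d : ι → κ → ℝ := fun i j => if S i j then x (i, j) else 0
  have hpair : ∀ (z : ι → κ → ℝ), (fun p : ι × κ => if S p.1 p.2 then z p.1 p.2 else 0) ⬝ᵥ x =
      ∑ i, ∑ j, z i j * d i j := fun z => by
    rw [dotProduct, Fintype.sum_prod_type]
    congr! 2 with i _ j _
    split_ifs <;> simp [d, *]
  have hsum : ∀ (a : ι → ℝ) (b : κ → ℝ), ∑ i, ∑ j, (a i + b j) * d i j = 0 := fun a b => by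
    rw [← hpair, ← hf]
    exact hrange (LinearMap.mem_range_self _ (a, b))
  have hd : d = 0 := by
    refine h d (fun i j hij => if_neg hij) (fun i => ?_) (fun j => ?_)
    · simpa [Pi.single_apply, ite_mul] using hsum (Pi.single i 1) 0
    · simpa [Pi.single_apply, ite_mul, sum_comm (γ := ι)] using hsum 0 (Pi.single j 1)
  exact hfy (by rw [hf, hpair]; simp [hd])

end Potentials

theorem local_min_entropy_coupling_quasi_orthogonal_general
    (n : ℕ) (pu pv : Fin n → ℝ)
    (P : Fin n → Fin n → ℝ)
    (hP : IsCoupling pu pv P)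
    (hloc : IsLocalMinOn matrixEntropy {Q | IsCoupling pu pv Q} P) :
    ∃ u v : Fin n → ℝ, ∀ i j, 0 < P i j → P i j = u i * v j := by
  obtain ⟨a, b, hab⟩ := exists_eq_add_on_of_forall_marginals_eq_zero (fun i j => 0 < P i j)
    (fun d hS hrow hcol => hloc.eq_zero_of_marginals_eq_zero hP hrow hcol
      fun i j h0 => hS i j h0.not_gt)
    (fun i j => log (P i j))
  exact ⟨fun i => exp (a i), fun j => exp (b j), fun i j hij => by
    rw [← exp_add, ← hab i j hij, exp_log hij]⟩

/-- **Local minima of the minimum entropy coupling problem are quasi-orthogonal.**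
Let `pu, pv` be probability distributions on `[n]` and let `P*` be a local minimizer of
the Shannon entropy `H(P) = -∑_{i,j} P(i,j) log₂ P(i,j)` over the polytope of `n × n`
couplings of `pu` and `pv`.  Then `P*` is quasi-orthogonal: there exist vectors
`u, v ∈ ℝⁿ` with `P*(i,j) = uᵢ vⱼ` for every pair `(i,j)` with `P*(i,j) > 0`; equivalently,
`P*` is a masked submatrix of a rank-1 matrix. -/
theorem local_min_entropy_coupling_quasi_orthogonal
    (n : ℕ) (pu pv : Fin n → ℝ)
    (hpu0 : ∀ i, 0 ≤ pu i) (hpusum : ∑ i, pu i = 1)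
    (hpv0 : ∀ j, 0 ≤ pv j) (hpvsum : ∑ j, pv j = 1)
    (P : Fin n → Fin n → ℝ)
    (hP : IsCoupling pu pv P)
    (hloc : IsLocalMinOn matrixEntropy {Q | IsCoupling pu pv Q} P) :
    ∃ u v : Fin n → ℝ, ∀ i j, 0 < P i j → P i j = u i * v j :=
  local_min_entropy_coupling_quasi_orthogonal_general n pu pv P hP hloc
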